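/- arXiv:2501.12938 — 5 statements merged into one kernel-verified Lean document; each statement's English description precedes it below -/
import Mathlib

section
/- (Claim 1, memoryless ingress achievability.) Fix ε ∈ (0,1), λ > 0 and δ > 0. For each n define E^adv_{1|0}(n) as the supremum, over all adversaries A : 𝒳^n × {0,1}^n → 𝒳^n with A(x^n,z^n) agreeing with x^n on every coordinate i with z_i = 0, of the probability that D(P_{A(X^n,Z^n)} ‖ P₁) ≤ λ + δ, where X^n is i.i.d. P₀ and Z^n is i.i.d. Bernoulli(ε) independent of X^n. Then liminf_{n→∞} −(1/n) log E^adv_{1|0}(n) ≥ min over ρ ∈ [0,1] and q,v ∈ Δ with D((1−ρ)q + ρv ‖ P₁) ≤ λ + δ of D₂(ρ‖ε) + (1−ρ)·D(q‖P₀). -/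
open scoped BigOperators ENNReal Classical
open Filter

noncomputable section

/-- The set of probability distributions on a finite alphabet. -/
def simplex (𝒳 : Type*) [Fintype 𝒳] : Set (𝒳 → ℝ) :=
  {p | (∀ x, 0 ≤ p x) ∧ ∑ x, p x = 1}

/-- Kullback–Leibler divergence, with values in `[0,∞]`. -/
def KL {𝒳 : Type*} [Fintype 𝒳] (p q : 𝒳 → ℝ) : ℝ≥0∞ :=
  if ∀ x, q x = 0 → p x = 0 then
    ENNReal.ofReal (∑ x, p x * Real.log (p x / q x))
  else ⊤

/-- KL ball of radius `r` around `p`. -/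
def BKL {𝒳 : Type*} [Fintype 𝒳] (p : 𝒳 → ℝ) (r : ℝ) : Set (𝒳 → ℝ) :=
  {q | q ∈ simplex 𝒳 ∧ KL q p ≤ ENNReal.ofReal r}

/-- Mixture `(1-a) p + a q`. -/
def mix {𝒳 : Type*} (a : ℝ) (p q : 𝒳 → ℝ) : 𝒳 → ℝ :=
  fun x => (1 - a) * p x + a * q x

/-- Binary KL divergence `D₂(ρ‖ε)`. -/
def D2 (ρ ε : ℝ) : ℝ≥0∞ :=
  KL (fun b : Bool => if b then ρ else 1 - ρ) (fun b : Bool => if b then ε else 1 - ε)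

/-- Total variation distance. -/
def dTV {𝒳 : Type*} [Fintype 𝒳] (p q : 𝒳 → ℝ) : ℝ :=
  (∑ x, |p x - q x|) / 2

/-- Empirical type of a string. -/
def typeOf {𝒳 : Type*} [Fintype 𝒳] [DecidableEq 𝒳] {n : ℕ} (x : Fin n → 𝒳) : 𝒳 → ℝ :=
  fun a => ((Finset.univ.filter fun i => x i = a).card : ℝ) / n

/-- i.i.d. probability of a string. -/
def iid {𝒳 : Type*} [Fintype 𝒳] (P : 𝒳 → ℝ) {n : ℕ} (x : Fin n → 𝒳) : ℝ :=
  ∏ i, P (x i)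

/-- Probability of `z` under i.i.d. Bernoulli(ε). -/
def berW (ε : ℝ) {n : ℕ} (z : Fin n → Bool) : ℝ :=
  ∏ i, if z i then ε else 1 - ε

/-- Hamming weight. -/
def wt {n : ℕ} (z : Fin n → Bool) : ℕ :=
  (Finset.univ.filter fun i => z i = true).card

/-- Probability of `z` under the uniform distribution on weight-⌈nε⌉ binary vectors. -/
def unifW (ε : ℝ) {n : ℕ} (z : Fin n → Bool) : ℝ :=
  if wt z = Nat.ceil ((n : ℝ) * ε) then
    (1 : ℝ) / ((Finset.univ.filter fun z' : Fin n → Bool => wt z' = Nat.ceil ((n : ℝ) * ε)).card : ℝ)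
  else 0

/-- `liminf -(1/n) log E(n) ≥ l` (in the extended reals). -/
def ExpLB (E : ℕ → ℝ) (l : ℝ) : Prop :=
  (l : EReal) ≤ Filter.liminf (fun n : ℕ => ((-(Real.log (E n)) / n : ℝ) : EReal)) Filter.atTop

/-- Worst-case error in Claim 1: supremum, over (deterministic) memoryless-ingress
adversaries, of the probability that the type of the corrupted samples lands in the
KL ball `B_KL(P1, t)`, when `X^n` is i.i.d. `P0` and `Z^n` is i.i.d. Bernoulli(ε). -/
def EadvClaim1 {𝒳 : Type*} [Fintype 𝒳] [DecidableEq 𝒳] (P0 P1 : 𝒳 → ℝ) (ε t : ℝ)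
    (n : ℕ) : ℝ :=
  sSup {e : ℝ | ∃ A : (Fin n → 𝒳) → (Fin n → Bool) → Fin n → 𝒳,
    (∀ x z i, z i = false → A x z i = x i) ∧
    e = ∑ x, ∑ z, iid P0 x * berW ε z *
          (if KL (typeOf (A x z)) P1 ≤ ENNReal.ofReal t then (1 : ℝ) else 0)}

open Finset Real Topology

/-! The method of types. Fix the erasure pattern `z`, of weight `k = nρ`, and let `q` be the type of
the `n - k` letters the adversary cannot touch. Whatever it writes elsewhere, the output type is
`mix ρ q v` for some law `v`, so an accepted output puts `(ρ, q, v)` in the feasible set of the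
infimum `I`. The strings with a given `q` have `P₀ⁿ`-mass at most `exp (-(n - k) D(q‖P₀))`, the
patterns of weight `k` have mass at most `exp (-n D₂(ρ‖ε))`, and there are only polynomially many
types; hence every adversary succeeds with probability at most `(n + 1) ^ (|𝒳| + 2) * exp (-n I)`.
Since types are dense and `D(·‖P₁)` is continuous, some type lies in the KL ball for large `n`, so
the optimal success probability is positive and its logarithm is not a junk value. -/

section Divergence

variable {𝒳 : Type*} [Fintype 𝒳]

def klR (p q : 𝒳 → ℝ) : ℝ :=
  ∑ x, p x * log (p x / q x)

lemma KL_eq_ofReal_klR {p q : 𝒳 → ℝ} (hq : ∀ x, 0 < q x) : KL p q = ENNReal.ofReal (klR p q) := by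
  rw [KL, if_pos fun x hx => absurd hx (hq x).ne']
  rfl

lemma klR_eq_sum_klFun {p q : 𝒳 → ℝ} (hq : ∀ x, 0 < q x) :
    klR p q = ∑ x, (q x * InformationTheory.klFun (p x / q x) + p x - q x) := by
  refine sum_congr rfl fun x _ => ?_
  have := (hq x).ne'
  rw [InformationTheory.klFun]
  field_simp
  ring

lemma klR_nonneg {p q : 𝒳 → ℝ} (hp : p ∈ simplex 𝒳) (hq : q ∈ simplex 𝒳) (hq0 : ∀ x, 0 < q x) :
    0 ≤ klR p q := by
  rw [klR_eq_sum_klFun hq0, sum_sub_distrib, sum_add_distrib, hp.2, hq.2, add_sub_cancel_right]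
  exact sum_nonneg fun x _ =>
    mul_nonneg (hq0 x).le (InformationTheory.klFun_nonneg (div_nonneg (hp.1 x) (hq0 x).le))

lemma klR_self {q : 𝒳 → ℝ} (hq : ∀ x, 0 < q x) : klR q q = 0 := by
  simp [klR, div_self (hq _).ne']

lemma continuous_klR_left {q : 𝒳 → ℝ} (hq : ∀ x, 0 < q x) : Continuous fun p => klR p q := by
  simp_rw [klR_eq_sum_klFun hq]
  fun_prop

end Divergence

def bern (p : ℝ) : Bool → ℝ := fun b => if b then p else 1 - p

lemma bern_mem_simplex {p : ℝ} (hp : p ∈ Set.Icc (0 : ℝ) 1) : bern p ∈ simplex Bool :=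
  ⟨fun b => by cases b <;> simp [bern, hp.1, hp.2], by simp [bern]⟩

lemma bern_pos {p : ℝ} (hp0 : 0 < p) (hp1 : p < 1) (b : Bool) : 0 < bern p b := by
  cases b <;> simp [bern, hp0, hp1]

lemma eq_bern_of_mem_simplex {q : Bool → ℝ} (hq : q ∈ simplex Bool) : q = bern (q true) := by
  have := hq.2
  simp only [Fintype.sum_bool] at this
  ext b
  cases b <;> simp [bern]
  linarith

section Types

variable {ι 𝒳 : Type*} [DecidableEq 𝒳]

def countOn (S : Finset ι) (x : ι → 𝒳) (a : 𝒳) : ℕ := #{i ∈ S | x i = a}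

def typeOn (S : Finset ι) (x : ι → 𝒳) : 𝒳 → ℝ := fun a => countOn S x a / #S

lemma typeOf_eq_typeOn_univ [Fintype 𝒳] {n : ℕ} (x : Fin n → 𝒳) : typeOf x = typeOn univ x := by
  ext a
  simp [typeOf, typeOn, countOn]

lemma countOn_le (S : Finset ι) (x : ι → 𝒳) (a : 𝒳) : countOn S x a ≤ #S :=
  card_filter_le _ _

lemma sum_countOn [Fintype 𝒳] (S : Finset ι) (x : ι → 𝒳) : ∑ a, countOn S x a = #S :=
  (card_eq_sum_card_fiberwise fun i _ => mem_univ (x i)).symm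

lemma countOn_congr {S : Finset ι} {x y : ι → 𝒳} (h : ∀ i ∈ S, x i = y i) :
    countOn S x = countOn S y := by
  ext a
  exact congrArg card (filter_congr fun i hi => by rw [h i hi])

lemma typeOn_mem_simplex [Fintype 𝒳] {S : Finset ι} (hS : S.Nonempty) (x : ι → 𝒳) :
    typeOn S x ∈ simplex 𝒳 := by
  refine ⟨fun a => div_nonneg (Nat.cast_nonneg _) (Nat.cast_nonneg _), ?_⟩
  simp only [typeOn, ← sum_div, ← Nat.cast_sum, sum_countOn]
  exact div_self (by exact_mod_cast hS.card_pos.ne')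

lemma card_div_mul_typeOn (S : Finset ι) (x : ι → 𝒳) (a : 𝒳) (N : ℝ) :
    #S / N * typeOn S x a = countOn S x a / N := by
  rcases S.eq_empty_or_nonempty with rfl | hS
  · simp [typeOn, countOn]
  · have : (#S : ℝ) ≠ 0 := by exact_mod_cast hS.card_pos.ne'
    simp only [typeOn]
    field_simp

lemma typeOn_univ_eq_mix [Fintype ι] [DecidableEq ι] (T : Finset ι) (x : ι → 𝒳) :
    typeOn univ x = mix (#T / Fintype.card ι) (typeOn Tᶜ x) (typeOn T x) := by
  ext a
  rcases isEmpty_or_nonempty ι with hι | hι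
  · simp [typeOn, countOn, mix, Finset.eq_empty_of_isEmpty]
  have hN : (Fintype.card ι : ℝ) ≠ 0 := by exact_mod_cast Fintype.card_ne_zero
  have hcompl : 1 - #T / (Fintype.card ι : ℝ) = #Tᶜ / Fintype.card ι := by
    rw [← card_compl_add_card T]
    field_simp
    push_cast
    ring
  have hcount : countOn univ x a = countOn Tᶜ x a + countOn T x a := by
    rw [countOn, countOn, countOn, ← card_union_of_disjoint
      (disjoint_filter_filter (disjoint_compl_left : Disjoint Tᶜ T)), ← filter_union,
      union_comm, union_compl]
  rw [mix, hcompl, card_div_mul_typeOn, card_div_mul_typeOn, typeOn, hcount, card_univ]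
  push_cast
  ring

lemma exists_countOn_univ_eq [Fintype 𝒳] {n : ℕ} {c : 𝒳 → ℕ}
    (hc : ∑ a, c a = n) : ∃ x : Fin n → 𝒳, countOn univ x = c := by
  obtain ⟨e⟩ : Nonempty (Fin n ≃ (a : 𝒳) × Fin (c a)) := Fintype.card_eq.1 (by simp [hc])
  refine ⟨fun i => (e i).1, funext fun a => ?_⟩
  rw [countOn, ← Fintype.card_subtype, Fintype.card_congr ((e.subtypeEquiv fun i => Iff.rfl).trans
    (Equiv.sigmaSubtype a)), Fintype.card_fin]

end Types

section MethodOfTypes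

variable {ι 𝒳 : Type*} [Fintype 𝒳] [DecidableEq 𝒳]

lemma prod_comp_eq_prod_pow_countOn (S : Finset ι) (x : ι → 𝒳) (f : 𝒳 → ℝ) :
    ∏ i ∈ S, f (x i) = ∏ a, f a ^ countOn S x a := by
  rw [← prod_fiberwise_of_maps_to fun i _ => mem_univ (x i)]
  refine prod_congr rfl fun a _ => ?_
  rw [prod_congr rfl fun i hi => congrArg f (mem_filter.1 hi).2, prod_const, countOn]

lemma prod_div_typeOn_pow_countOn {P : 𝒳 → ℝ} (hP : ∀ a, 0 < P a) (S : Finset ι) (x : ι → 𝒳) :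
    ∏ a, (P a / typeOn S x a) ^ countOn S x a = exp (-#S * klR (typeOn S x) P) := by
  rw [klR, mul_sum, exp_sum]
  refine prod_congr rfl fun a _ => ?_
  rcases (countOn S x a).eq_zero_or_pos with h | h
  · simp [typeOn, h]
  have hS : (0 : ℝ) < #S := by exact_mod_cast h.trans_le (countOn_le S x a)
  have hq : 0 < typeOn S x a := div_pos (by exact_mod_cast h) hS
  have hc : (#S : ℝ) * typeOn S x a = countOn S x a := by
    simp only [typeOn]
    field_simp
  rw [← exp_log (div_pos (hP a) hq), ← exp_nat_mul, log_div (hP a).ne' hq.ne',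
    log_div hq.ne' (hP a).ne', ← hc]
  ring_nf

lemma sum_prod_countOn_eq_le {P : 𝒳 → ℝ} (hP : P ∈ simplex 𝒳) (hP0 : ∀ a, 0 < P a)
    [Fintype ι] [DecidableEq ι] (S : Finset ι) (x : ι → 𝒳) :
    ∑ y : ι → 𝒳 with countOn S y = countOn S x, ∏ i, P (y i) ≤ exp (-#S * klR (typeOn S x) P) := by
  set q := typeOn S x
  set c := countOn S x
  -- On the fiber, `∏ P = exp (-#S * D(q‖P)) * ∏ w`, and `∏ w` is a product law of total mass one.
  set w : ι → 𝒳 → ℝ := fun i => if i ∈ S then q else P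
  have hw : ∀ i, w i ∈ simplex 𝒳 := fun i => by
    by_cases hi : i ∈ S
    · simpa [w, hi] using typeOn_mem_simplex ⟨i, hi⟩ x
    · simpa [w, hi] using hP
  have hfactor : ∀ y : ι → 𝒳, countOn S y = c →
      ∏ i, P (y i) = exp (-#S * klR q P) * ∏ i, w i (y i) := by
    intro y hy
    have hwS : ∏ i ∈ S, w i (y i) = ∏ i ∈ S, q (y i) := prod_congr rfl fun i hi => by simp [w, hi]
    have hwSc : ∏ i ∈ Sᶜ, w i (y i) = ∏ i ∈ Sᶜ, P (y i) :=
      prod_congr rfl fun i hi => by simp [w, mem_compl.1 hi]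
    rw [← prod_mul_prod_compl S, ← prod_mul_prod_compl S fun i => w i (y i), hwS, hwSc,
      prod_comp_eq_prod_pow_countOn S y P, prod_comp_eq_prod_pow_countOn S y q, hy,
      ← prod_div_typeOn_pow_countOn hP0, ← mul_assoc, ← prod_mul_distrib]
    congr 1
    refine prod_congr rfl fun a _ => ?_
    rcases (c a).eq_zero_or_pos with h | h
    · simp only [show countOn S x a = 0 from h, h, pow_zero, mul_one]
    have hq : q a ≠ 0 := by
      have hS : (0 : ℝ) < #S := by exact_mod_cast h.trans_le (countOn_le S x a)
      exact (div_pos (by exact_mod_cast h) hS).ne'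
    rw [← mul_pow, div_mul_cancel₀ _ hq]
  calc ∑ y : ι → 𝒳 with countOn S y = c, ∏ i, P (y i)
      = exp (-#S * klR q P) * ∑ y : ι → 𝒳 with countOn S y = c, ∏ i, w i (y i) := by
        rw [mul_sum]
        exact sum_congr rfl fun y hy => hfactor y (mem_filter.1 hy).2
    _ ≤ exp (-#S * klR q P) * ∑ y : ι → 𝒳, ∏ i, w i (y i) := by
        refine mul_le_mul_of_nonneg_left ?_ (exp_pos _).le
        exact sum_le_sum_of_subset_of_nonneg (filter_subset _ _) fun y _ _ =>
          prod_nonneg fun i _ => (hw i).1 _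
    _ = exp (-#S * klR q P) := by
        rw [← Fintype.prod_sum, prod_eq_one fun i _ => (hw i).2, mul_one]

lemma card_image_countOn_le (S : Finset ι) (F : Finset (ι → 𝒳)) :
    #(F.image (countOn S)) ≤ (#S + 1) ^ Fintype.card 𝒳 := by
  calc #(F.image (countOn S)) ≤ #(Fintype.piFinset fun _ : 𝒳 => range (#S + 1)) := by
        refine card_le_card fun c hc => ?_
        obtain ⟨y, -, rfl⟩ := mem_image.1 hc
        exact Fintype.mem_piFinset.2 fun a => mem_range.2 (Nat.lt_succ_of_le (countOn_le S y a))
    _ = (#S + 1) ^ Fintype.card 𝒳 := by simp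

end MethodOfTypes

lemma sum_le_card_image_mul {α β : Type*} [Fintype α] [DecidableEq β] {s : Finset α} (g : α → β)
    {f : α → ℝ} (hf : ∀ x, 0 ≤ f x) {B : ℝ} (hB : ∀ x ∈ s, ∑ y with g y = g x, f y ≤ B) :
    ∑ x ∈ s, f x ≤ #(s.image g) * B := by
  rw [← sum_fiberwise_of_maps_to fun x hx => mem_image_of_mem g hx, ← nsmul_eq_mul, ← sum_const]
  refine sum_le_sum fun b hb => ?_
  obtain ⟨x, hx, rfl⟩ := mem_image.1 hb
  exact (sum_le_sum_of_subset_of_nonneg (filter_subset_filter _ (subset_univ s))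
    fun y _ _ => hf y).trans (hB x hx)

@[simp]
lemma mix_zero {𝒳 : Type*} (q v : 𝒳 → ℝ) : mix 0 q v = q := by
  ext
  simp [mix]

@[simp]
lemma mix_one {𝒳 : Type*} (q v : 𝒳 → ℝ) : mix 1 q v = v := by
  ext
  simp [mix]

section Adversary

variable {𝒳 : Type*} [Fintype 𝒳] {P0 P1 : 𝒳 → ℝ} {ε t L : ℝ}

def rate (P0 : 𝒳 → ℝ) (ε ρ : ℝ) (q : 𝒳 → ℝ) : ℝ :=
  klR (bern ρ) (bern ε) + (1 - ρ) * klR q P0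

lemma rate_nonneg {ρ : ℝ} {q : 𝒳 → ℝ} (hP0 : P0 ∈ simplex 𝒳)
    (hfs0 : ∀ a, 0 < P0 a) (hε : 0 < ε) (hε1 : ε < 1) (hρ : ρ ∈ Set.Icc (0 : ℝ) 1)
    (hq : q ∈ simplex 𝒳) : 0 ≤ rate P0 ε ρ q :=
  add_nonneg (klR_nonneg (bern_mem_simplex hρ) (bern_mem_simplex ⟨hε.le, hε1.le⟩) (bern_pos hε hε1))
    (mul_nonneg (sub_nonneg.2 hρ.2) (klR_nonneg hq hP0 hfs0))

lemma D2_add_mul_KL_eq_ofReal_rate {ρ : ℝ} {q : 𝒳 → ℝ} (hP0 : P0 ∈ simplex 𝒳)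
    (hfs0 : ∀ a, 0 < P0 a) (hε : 0 < ε) (hε1 : ε < 1) (hρ : ρ ∈ Set.Icc (0 : ℝ) 1)
    (hq : q ∈ simplex 𝒳) :
    D2 ρ ε + ENNReal.ofReal (1 - ρ) * KL q P0 = ENNReal.ofReal (rate P0 ε ρ q) := by
  change KL (bern ρ) (bern ε) + _ = _
  rw [KL_eq_ofReal_klR (bern_pos hε hε1), KL_eq_ofReal_klR hfs0,
    ← ENNReal.ofReal_mul (sub_nonneg.2 hρ.2), ← ENNReal.ofReal_add]
  · rfl
  · exact klR_nonneg (bern_mem_simplex hρ) (bern_mem_simplex ⟨hε.le, hε1.le⟩) (bern_pos hε hε1)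
  · exact mul_nonneg (sub_nonneg.2 hρ.2) (klR_nonneg hq hP0 hfs0)

def IsRateLowerBound (P0 P1 : 𝒳 → ℝ) (ε t L : ℝ) : Prop :=
  ∀ ρ ∈ Set.Icc (0 : ℝ) 1, ∀ q ∈ simplex 𝒳, ∀ v ∈ simplex 𝒳,
    KL (mix ρ q v) P1 ≤ ENNReal.ofReal t → L ≤ rate P0 ε ρ q

/-- The component of a mixture that has weight zero may be anything, e.g. `typeOn ∅ _ = 0`, which
is not a law. -/
lemma IsRateLowerBound.le_rate (hL : IsRateLowerBound P0 P1 ε t L) (hP0 : P0 ∈ simplex 𝒳)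
    (hP1 : P1 ∈ simplex 𝒳) {ρ : ℝ} (hρ : ρ ∈ Set.Icc (0 : ℝ) 1) {q v : 𝒳 → ℝ}
    (hq : ρ ≠ 1 → q ∈ simplex 𝒳) (hv : ρ ≠ 0 → v ∈ simplex 𝒳)
    (h : KL (mix ρ q v) P1 ≤ ENNReal.ofReal t) : L ≤ rate P0 ε ρ q := by
  rcases eq_or_ne ρ 1 with rfl | hρ1
  · simpa [rate] using hL 1 hρ P0 hP0 v (hv one_ne_zero) (by rwa [mix_one] at h ⊢)
  rcases eq_or_ne ρ 0 with rfl | hρ0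
  · exact hL 0 hρ q (hq hρ1) P1 hP1 (by rwa [mix_zero] at h ⊢)
  exact hL ρ hρ q (hq hρ1) v (hv hρ0) h

lemma IsRateLowerBound.card_mul_le_of_KL_typeOn_le [DecidableEq 𝒳]
    (hL : IsRateLowerBound P0 P1 ε t L) (hP0 : P0 ∈ simplex 𝒳) (hP1 : P1 ∈ simplex 𝒳)
    {ι : Type*} [Fintype ι] [DecidableEq ι] (T : Finset ι) (y : ι → 𝒳)
    (hy : KL (typeOn univ y) P1 ≤ ENNReal.ofReal t) :
    Fintype.card ι * L ≤
      Fintype.card ι * klR (bern (#T / Fintype.card ι)) (bern ε) + #Tᶜ * klR (typeOn Tᶜ y) P0 := by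
  rcases isEmpty_or_nonempty ι with hι | hι
  · simp [Finset.eq_empty_of_isEmpty]
  set N : ℝ := (Fintype.card ι : ℝ)
  have hN : 0 < N := by simp [N, Fintype.card_pos]
  have hTN : (#T : ℝ) + #Tᶜ = N := by simp only [N]; exact_mod_cast card_add_card_compl T
  have hρ : (#T / N : ℝ) ∈ Set.Icc (0 : ℝ) 1 :=
    ⟨by positivity, (div_le_one hN).2 (by linarith [(#Tᶜ).cast_nonneg (α := ℝ)])⟩
  have hTc : #T / N ≠ 1 → Tᶜ.Nonempty := fun h => card_pos.1 <| Nat.pos_of_ne_zero fun h0 => h <| by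
    rw [h0, Nat.cast_zero, add_zero] at hTN
    rw [hTN, div_self hN.ne']
  have hT : #T / N ≠ 0 → T.Nonempty := fun h => card_pos.1 <| Nat.pos_of_ne_zero fun h0 => h <| by
    rw [h0, Nat.cast_zero, zero_div]
  have key := hL.le_rate hP0 hP1 hρ (fun h => typeOn_mem_simplex (hTc h) y)
    (fun h => typeOn_mem_simplex (hT h) y) (typeOn_univ_eq_mix T y ▸ hy)
  have h1ρ : N * (1 - #T / N) = #Tᶜ := by field_simp; linarith
  calc N * L ≤ N * rate P0 ε (#T / N) (typeOn Tᶜ y) := mul_le_mul_of_nonneg_left key hN.le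
    _ = _ := by rw [rate, mul_add, ← mul_assoc, h1ρ]

variable [DecidableEq 𝒳]

def successProb (P0 P1 : 𝒳 → ℝ) (ε t : ℝ) {n : ℕ}
    (A : (Fin n → 𝒳) → (Fin n → Bool) → Fin n → 𝒳) : ℝ :=
  ∑ x, ∑ z, iid P0 x * berW ε z *
    (if KL (typeOf (A x z)) P1 ≤ ENNReal.ofReal t then (1 : ℝ) else 0)

lemma IsRateLowerBound.sum_iid_accepted_le (hL : IsRateLowerBound P0 P1 ε t L)
    (hP0 : P0 ∈ simplex 𝒳) (hP1 : P1 ∈ simplex 𝒳) (hfs0 : ∀ a, 0 < P0 a) {n : ℕ}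
    {A : (Fin n → 𝒳) → (Fin n → Bool) → Fin n → 𝒳} (hA : ∀ x z i, z i = false → A x z i = x i)
    (z : Fin n → Bool) :
    ∑ x, iid P0 x * (if KL (typeOf (A x z)) P1 ≤ ENNReal.ofReal t then (1 : ℝ) else 0) ≤
      ((n : ℝ) + 1) ^ Fintype.card 𝒳 * exp (n * klR (bern (wt z / n)) (bern ε) - n * L) := by
  set T : Finset (Fin n) := {i | z i = true}
  have hAT : ∀ x, typeOn Tᶜ (A x z) = typeOn Tᶜ x := fun x => by
    unfold typeOn
    rw [countOn_congr fun i hi => hA x z i (by simpa [T] using hi)]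
  have hT : #T = wt z := rfl
  have hTc : #Tᶜ ≤ n := (card_le_univ _).trans_eq (Fintype.card_fin n)
  simp only [mul_ite, mul_one, mul_zero, ← sum_filter]
  calc _ ≤ #((univ.filter fun x => KL (typeOf (A x z)) P1 ≤ ENNReal.ofReal t).image (countOn Tᶜ)) *
        exp (n * klR (bern (wt z / n)) (bern ε) - n * L) := by
        refine sum_le_card_image_mul _ (fun x => prod_nonneg fun i _ => (hfs0 _).le) fun x hx => ?_
        refine (sum_prod_countOn_eq_le hP0 hfs0 Tᶜ x).trans (exp_le_exp.2 ?_)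
        have := hL.card_mul_le_of_KL_typeOn_le hP0 hP1 T (A x z)
          (typeOf_eq_typeOn_univ (A x z) ▸ (mem_filter.1 hx).2)
        rw [Fintype.card_fin, hAT, hT] at this
        linarith
    _ ≤ _ := by
        gcongr
        exact_mod_cast (card_image_countOn_le _ _).trans (Nat.pow_le_pow_left (by omega) _)

lemma IsRateLowerBound.successProb_le (hL : IsRateLowerBound P0 P1 ε t L) (hP0 : P0 ∈ simplex 𝒳)
    (hP1 : P1 ∈ simplex 𝒳) (hfs0 : ∀ a, 0 < P0 a) (hε : 0 < ε) (hε1 : ε < 1) {n : ℕ} (hn : 0 < n)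
    {A : (Fin n → 𝒳) → (Fin n → Bool) → Fin n → 𝒳} (hA : ∀ x z i, z i = false → A x z i = x i) :
    successProb P0 P1 ε t A ≤ ((n : ℝ) + 1) ^ (Fintype.card 𝒳 + 2) * exp (-n * L) := by
  set C := ((n : ℝ) + 1) ^ Fintype.card 𝒳
  set G : (Fin n → Bool) → ℝ := fun z => C * exp (n * klR (bern (wt z / n)) (bern ε) - n * L)
  have hber : ∀ z : Fin n → Bool, 0 ≤ berW ε z :=
    fun z => prod_nonneg fun i _ => (bern_pos hε hε1 _).le
  have hG : ∀ z, G z * exp (-n * klR (typeOn univ z) (bern ε)) = C * exp (-n * L) := fun z => by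
    have hne : (univ : Finset (Fin n)).Nonempty := univ_nonempty_iff.2 ⟨⟨0, hn⟩⟩
    have : typeOn univ z = bern (wt z / n) := by
      rw [eq_bern_of_mem_simplex (typeOn_mem_simplex hne z)]
      simp [typeOn, countOn, wt]
    rw [this, mul_assoc, ← exp_add]
    ring_nf
  calc successProb P0 P1 ε t A
      = ∑ z, berW ε z * ∑ x, iid P0 x *
          (if KL (typeOf (A x z)) P1 ≤ ENNReal.ofReal t then (1 : ℝ) else 0) := by
        rw [successProb, sum_comm]
        exact sum_congr rfl fun z _ => by rw [mul_sum]; exact sum_congr rfl fun x _ => by ring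
    _ ≤ ∑ z, berW ε z * G z :=
        sum_le_sum fun z _ =>
          mul_le_mul_of_nonneg_left (hL.sum_iid_accepted_le hP0 hP1 hfs0 hA z) (hber z)
    _ ≤ #(univ.image (countOn univ)) * (C * exp (-n * L)) := by
        refine sum_le_card_image_mul _ (fun z => mul_nonneg (hber z) (by positivity)) fun z _ => ?_
        have hwt : ∀ z' ∈ univ.filter fun z' => countOn univ z' = countOn univ z,
            berW ε z' * G z' = berW ε z' * G z := fun z' hz' => by
          simp only [G, show wt z' = wt z from congrFun (mem_filter.1 hz').2 true]
        rw [sum_congr rfl hwt, ← sum_mul, mul_comm, ← hG z]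
        refine mul_le_mul_of_nonneg_left ?_ (by positivity)
        have := sum_prod_countOn_eq_le (bern_mem_simplex ⟨hε.le, hε1.le⟩) (bern_pos hε hε1) univ z
        rwa [card_univ, Fintype.card_fin] at this
    _ ≤ ((n : ℝ) + 1) ^ 2 * (C * exp (-n * L)) := by
        gcongr
        exact_mod_cast (card_image_countOn_le univ univ).trans_eq (by simp)
    _ = ((n : ℝ) + 1) ^ (Fintype.card 𝒳 + 2) * exp (-n * L) := by ring

lemma successProb_id_pos (hfs0 : ∀ a, 0 < P0 a) (hε : 0 < ε) (hε1 : ε < 1) {n : ℕ}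
    {x₀ : Fin n → 𝒳} (hx₀ : KL (typeOf x₀) P1 ≤ ENNReal.ofReal t) :
    0 < successProb P0 P1 ε t fun (x : Fin n → 𝒳) _ => x := by
  have hterm : ∀ (x : Fin n → 𝒳) (z : Fin n → Bool), 0 ≤ iid P0 x * berW ε z *
      (if KL (typeOf x) P1 ≤ ENNReal.ofReal t then (1 : ℝ) else 0) := fun x z =>
    mul_nonneg (mul_nonneg (prod_nonneg fun i _ => (hfs0 _).le)
      (prod_nonneg fun i _ => (bern_pos hε hε1 _).le)) (by split_ifs <;> norm_num)
  refine sum_pos' (fun x _ => sum_nonneg fun z _ => hterm x z)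
    ⟨x₀, mem_univ _, sum_pos' (fun z _ => hterm x₀ z) ⟨fun _ => false, mem_univ _, ?_⟩⟩
  rw [if_pos hx₀, mul_one]
  exact mul_pos (prod_pos fun i _ => hfs0 _) (prod_pos fun i _ => bern_pos hε hε1 false)

lemma IsRateLowerBound.EadvClaim1_le (hL : IsRateLowerBound P0 P1 ε t L) (hP0 : P0 ∈ simplex 𝒳)
    (hP1 : P1 ∈ simplex 𝒳) (hfs0 : ∀ a, 0 < P0 a) (hε : 0 < ε) (hε1 : ε < 1) {n : ℕ} (hn : 0 < n) :
    EadvClaim1 P0 P1 ε t n ≤ ((n : ℝ) + 1) ^ (Fintype.card 𝒳 + 2) * exp (-n * L) :=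
  csSup_le ⟨_, fun x _ => x, fun _ _ _ _ => rfl, rfl⟩ <| by
    rintro _ ⟨A, hA, rfl⟩
    exact hL.successProb_le hP0 hP1 hfs0 hε hε1 hn hA

lemma IsRateLowerBound.EadvClaim1_pos (hL : IsRateLowerBound P0 P1 ε t L) (hP0 : P0 ∈ simplex 𝒳)
    (hP1 : P1 ∈ simplex 𝒳) (hfs0 : ∀ a, 0 < P0 a) (hε : 0 < ε) (hε1 : ε < 1) {n : ℕ} (hn : 0 < n)
    (hgood : ∃ x₀ : Fin n → 𝒳, KL (typeOf x₀) P1 ≤ ENNReal.ofReal t) :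
    0 < EadvClaim1 P0 P1 ε t n := by
  obtain ⟨x₀, hx₀⟩ := hgood
  refine (successProb_id_pos hfs0 hε hε1 hx₀).trans_le
    (le_csSup ⟨((n : ℝ) + 1) ^ (Fintype.card 𝒳 + 2) * exp (-n * L), ?_⟩
      ⟨fun x _ => x, fun _ _ _ _ => rfl, rfl⟩)
  rintro _ ⟨A, hA, rfl⟩
  exact hL.successProb_le hP0 hP1 hfs0 hε hε1 hn hA

end Adversary

lemma le_liminf_neg_log_div_of_le {E : ℕ → ℝ} {L : ℝ} (d : ℕ) (hpos : ∀ᶠ n in atTop, 0 < E n)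
    (hle : ∀ᶠ n in atTop, E n ≤ ((n : ℝ) + 1) ^ d * exp (-n * L)) :
    (L : EReal) ≤ liminf (fun n : ℕ => ((-(log (E n)) / n : ℝ) : EReal)) atTop := by
  have hlog : Tendsto (fun n : ℕ => log ((n : ℝ) + 1) / n) atTop (𝓝 0) := by
    have := (tendsto_pow_log_div_mul_add_atTop 1 (-1) 1 one_ne_zero).comp
      (tendsto_atTop_add_const_right atTop 1 tendsto_natCast_atTop_atTop)
    simpa [Function.comp_def] using this
  have hlim : Tendsto (fun n : ℕ => L - d * (log ((n : ℝ) + 1) / n)) atTop (𝓝 L) := by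
    simpa using (hlog.const_mul (d : ℝ)).const_sub L
  calc (L : EReal) = liminf (fun n : ℕ => ((L - d * (log ((n : ℝ) + 1) / n) : ℝ) : EReal)) atTop :=
        ((continuous_coe_real_ereal.tendsto L).comp hlim).liminf_eq.symm
    _ ≤ _ := by
        refine liminf_le_liminf ?_
        filter_upwards [hpos, hle, eventually_gt_atTop 0] with n hpos hle hn
        have hn' : (0 : ℝ) < n := by exact_mod_cast hn
        have hlogE := log_le_log hpos hle
        rw [log_mul (by positivity) (exp_pos _).ne', log_pow, log_exp] at hlogE
        refine EReal.coe_le_coe_iff.2 ((le_div_iff₀ hn').2 ?_)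
        rw [sub_mul, mul_assoc, div_mul_cancel₀ _ hn'.ne']
        linarith

section Rounding

variable {𝒳 : Type*} [Fintype 𝒳] [DecidableEq 𝒳] {P : 𝒳 → ℝ}

lemma exists_counts_div_tendsto (hP : P ∈ simplex 𝒳) :
    ∃ c : ℕ → 𝒳 → ℕ, (∀ n, ∑ a, c n a = n) ∧
      ∀ a, Tendsto (fun n : ℕ => (c n a : ℝ) / n) atTop (𝓝 (P a)) := by
  obtain ⟨a₀, -, -⟩ := exists_ne_zero_of_sum_ne_zero (hP.2.symm ▸ one_ne_zero : ∑ a, P a ≠ 0)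
  set f : ℕ → 𝒳 → ℕ := fun n a => ⌊P a * n⌋₊
  have hf : ∀ a, Tendsto (fun n : ℕ => (f n a : ℝ) / n) atTop (𝓝 (P a)) := fun a =>
    (tendsto_nat_floor_mul_div_atTop (hP.1 a)).comp tendsto_natCast_atTop_atTop
  have hfn : ∀ n, ∑ a, f n a ≤ n := fun n => by
    have : (∑ a, f n a : ℝ) ≤ n := calc
      (∑ a, f n a : ℝ) ≤ ∑ a, P a * n := sum_le_sum fun a _ =>
          Nat.floor_le (mul_nonneg (hP.1 a) n.cast_nonneg)
      _ = n := by rw [← sum_mul, hP.2, one_mul]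
    exact_mod_cast this
  -- the letters lost to rounding down are all given to `a₀`
  refine ⟨fun n a => f n a + if a = a₀ then n - ∑ b, f n b else 0, fun n => ?_, fun a => ?_⟩
  · rw [sum_add_distrib, sum_ite_eq' univ a₀, if_pos (mem_univ _)]
    exact Nat.add_sub_of_le (hfn n)
  have hlim : Tendsto
      (fun n : ℕ => (f n a : ℝ) / n + if a = a₀ then 1 - ∑ b, (f n b : ℝ) / n else 0)
      atTop (𝓝 (P a + if a = a₀ then 1 - ∑ b, P b else 0)) := by
    refine (hf a).add ?_
    split_ifs
    · exact tendsto_const_nhds.sub (tendsto_finsetSum _ fun b _ => hf b)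
    · exact tendsto_const_nhds
  rw [hP.2, sub_self, ite_self, add_zero] at hlim
  refine hlim.congr' ((eventually_gt_atTop 0).mono fun n hn => ?_)
  have hn' : (n : ℝ) ≠ 0 := by exact_mod_cast hn.ne'
  dsimp only
  split_ifs
  · rw [Nat.cast_add, Nat.cast_sub (hfn n), Nat.cast_sum, ← sum_div]
    field_simp
  · rw [Nat.add_zero, add_zero]

lemma eventually_exists_KL_typeOf_le (hP : P ∈ simplex 𝒳) (hP0 : ∀ a, 0 < P a) {t : ℝ}
    (ht : 0 < t) : ∀ᶠ n in atTop, ∃ x : Fin n → 𝒳, KL (typeOf x) P ≤ ENNReal.ofReal t := by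
  obtain ⟨c, hc, hlim⟩ := exists_counts_div_tendsto hP
  have hkl : Tendsto (fun n : ℕ => klR (fun a => (c n a : ℝ) / n) P) atTop (𝓝 0) := by
    rw [← klR_self hP0]
    exact ((continuous_klR_left hP0).tendsto P).comp (tendsto_pi_nhds.2 hlim)
  filter_upwards [hkl.eventually (ge_mem_nhds ht)] with n hn
  obtain ⟨x, hx⟩ := exists_countOn_univ_eq (hc n)
  refine ⟨x, ?_⟩
  have htype : typeOf x = fun a => (c n a : ℝ) / n := by
    rw [typeOf_eq_typeOn_univ]
    unfold typeOn
    rw [hx, card_univ, Fintype.card_fin]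
  rw [KL_eq_ofReal_klR hP0, htype]
  exact ENNReal.ofReal_le_ofReal hn

end Rounding

theorem claim1_memoryless_achievability_general {𝒳 : Type*} [Fintype 𝒳] [DecidableEq 𝒳]
    (P0 P1 : 𝒳 → ℝ) (hP0 : P0 ∈ simplex 𝒳) (hP1 : P1 ∈ simplex 𝒳)
    (hfs0 : ∀ x, 0 < P0 x) (hfs1 : ∀ x, 0 < P1 x)
    {ε lam δ : ℝ} (hε : 0 < ε) (hε1 : ε < 1) (hlam : 0 < lam) (hδ : 0 < δ) :
    ((⨅ ρ ∈ Set.Icc (0:ℝ) 1, ⨅ q ∈ simplex 𝒳, ⨅ v ∈ simplex 𝒳,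
        ⨅ (_ : KL (mix ρ q v) P1 ≤ ENNReal.ofReal (lam + δ)),
          D2 ρ ε + ENNReal.ofReal (1 - ρ) * KL q P0 : ℝ≥0∞) : EReal) ≤
      Filter.liminf (fun n : ℕ =>
        ((-(Real.log (EadvClaim1 P0 P1 ε (lam + δ) n)) / n : ℝ) : EReal))
        Filter.atTop := by
  set I : ℝ≥0∞ := ⨅ ρ ∈ Set.Icc (0:ℝ) 1, ⨅ q ∈ simplex 𝒳, ⨅ v ∈ simplex 𝒳,
    ⨅ (_ : KL (mix ρ q v) P1 ≤ ENNReal.ofReal (lam + δ)), D2 ρ ε + ENNReal.ofReal (1 - ρ) * KL q P0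
  have hI : ∀ ρ ∈ Set.Icc (0 : ℝ) 1, ∀ q ∈ simplex 𝒳, ∀ v ∈ simplex 𝒳,
      KL (mix ρ q v) P1 ≤ ENNReal.ofReal (lam + δ) → I ≤ ENNReal.ofReal (rate P0 ε ρ q) :=
    fun ρ hρ q hq v hv h => (iInf₂_le ρ hρ).trans <| (iInf₂_le q hq).trans <|
      (iInf₂_le v hv).trans <| (iInf_le _ h).trans_eq <|
        D2_add_mul_KL_eq_ofReal_rate hP0 hfs0 hε hε1 hρ hq
  have hmix : KL (mix 1 P0 P1) P1 ≤ ENNReal.ofReal (lam + δ) := by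
    rw [mix_one, KL_eq_ofReal_klR hfs1, klR_self hfs1, ENNReal.ofReal_zero]
    exact zero_le
  have hItop : I ≠ ⊤ :=
    ne_top_of_le_ne_top ENNReal.ofReal_ne_top (hI 1 ⟨zero_le_one, le_rfl⟩ P0 hP0 P1 hP1 hmix)
  have hL : IsRateLowerBound P0 P1 ε (lam + δ) I.toReal := fun ρ hρ q hq v hv h =>
    ENNReal.toReal_le_of_le_ofReal (rate_nonneg hP0 hfs0 hε hε1 hρ hq) (hI ρ hρ q hq v hv h)
  rw [← ENNReal.ofReal_toReal hItop, EReal.coe_ennreal_ofReal, max_eq_left ENNReal.toReal_nonneg]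
  refine le_liminf_neg_log_div_of_le (Fintype.card 𝒳 + 2) ?_ ?_
  · filter_upwards [eventually_exists_KL_typeOf_le hP1 hfs1 (add_pos hlam hδ),
      eventually_gt_atTop 0] with n hgood hn
    exact hL.EadvClaim1_pos hP0 hP1 hfs0 hε hε1 hn hgood
  · filter_upwards [eventually_gt_atTop 0] with n hn
    exact hL.EadvClaim1_le hP0 hP1 hfs0 hε hε1 hn

/-- **Claim 1** (memoryless ingress achievability). -/
theorem claim1_memoryless_achievability {𝒳 : Type*} [Fintype 𝒳] [DecidableEq 𝒳]
    [Nonempty 𝒳]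
    (P0 P1 : 𝒳 → ℝ) (hP0 : P0 ∈ simplex 𝒳) (hP1 : P1 ∈ simplex 𝒳)
    (hfs0 : ∀ x, 0 < P0 x) (hfs1 : ∀ x, 0 < P1 x) (hne : P0 ≠ P1)
    {ε lam δ : ℝ} (hε : 0 < ε) (hε1 : ε < 1) (hlam : 0 < lam) (hδ : 0 < δ) :
    ((⨅ ρ ∈ Set.Icc (0:ℝ) 1, ⨅ q ∈ simplex 𝒳, ⨅ v ∈ simplex 𝒳,
        ⨅ (_ : KL (mix ρ q v) P1 ≤ ENNReal.ofReal (lam + δ)),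
          D2 ρ ε + ENNReal.ofReal (1 - ρ) * KL q P0 : ℝ≥0∞) : EReal) ≤
      Filter.liminf (fun n : ℕ =>
        ((-(Real.log (EadvClaim1 P0 P1 ε (lam + δ) n)) / n : ℝ) : EReal))
        Filter.atTop :=
  claim1_memoryless_achievability_general P0 P1 hP0 hP1 hfs0 hfs1 hε hε1 hlam hδ

end
end

section
/- (Claim 2.) For any λ ∈ (0, D(P₀‖P₁)) and any ε ∈ (0,1), the minimum over ρ ∈ [0,1] and q,v ∈ Δ satisfying D((1−ρ)q + ρv ‖ P₁) ≤ λ of the quantity D₂(ρ‖ε) + (1−ρ)·D(q‖P₀) is greater than or equal to the minimum over u ∈ Δ and p ∈ B_KL(P₁, λ) of D(p ‖ (1−ε)P₀ + εu). -/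
open scoped BigOperators ENNReal Classical
open Filter

noncomputable section

/-!
Take `u := v` and `p := (1-ρ) q + ρ v`, which lies in the KL ball by the constraint. Coordinatewise,
the two-term log-sum inequality splits `p x log (p x / ((1-ε) P₀ x + ε v x))` into a `q`-part and a
`v`-part; summing, the `v`-part contributes `ρ log (ρ/ε)` and the `q`-part
`(1-ρ) log ((1-ρ)/(1-ε)) + (1-ρ) D(q‖P₀)`, i.e. exactly `D₂(ρ‖ε) + (1-ρ) D(q‖P₀)`.
-/

open Real

/-- The log-sum inequality for two terms (with the conventions `log 0 = 0`, `x / 0 = 0`). -/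
lemma add_mul_log_add_div_add_le {a b c d : ℝ} (ha : 0 ≤ a) (hb : 0 ≤ b) (hc : 0 ≤ c)
    (hd : 0 ≤ d) (hac : c = 0 → a = 0) (hbd : d = 0 → b = 0) :
    (a + b) * log ((a + b) / (c + d)) ≤ a * log (a / c) + b * log (b / d) := by
  rcases (add_nonneg hc hd).eq_or_lt with hcd | hcd
  · have hc0 : c = 0 := by linarith
    have hd0 : d = 0 := by linarith
    simp [hac hc0, hbd hd0]
  -- convexity of `x log x` at the points `a/c`, `b/d` with weights `c/(c+d)`, `d/(c+d)`
  have hconv := convexOn_mul_log.2 (Set.mem_Ici.2 (div_nonneg ha hc))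
    (Set.mem_Ici.2 (div_nonneg hb hd)) (div_nonneg hc hcd.le) (div_nonneg hd hcd.le)
    (by rw [← add_div, div_self hcd.ne'])
  simp only [smul_eq_mul, div_mul_eq_mul_div _ _ (_ / _), mul_div_cancel_of_imp' hac,
    mul_div_cancel_of_imp' hbd, ← add_div] at hconv
  calc (a + b) * log ((a + b) / (c + d))
      = (c + d) * ((a + b) / (c + d) * log ((a + b) / (c + d))) := by
        rw [← mul_assoc, mul_div_cancel₀ _ hcd.ne']
    _ ≤ (c + d) * (c / (c + d) * (a / c * log (a / c)) + d / (c + d) * (b / d * log (b / d))) :=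
        mul_le_mul_of_nonneg_left hconv hcd.le
    _ = a * log (a / c) + b * log (b / d) := by
        simp only [mul_add, ← mul_assoc, mul_div_cancel₀ _ hcd.ne', mul_div_cancel_of_imp' hac,
          mul_div_cancel_of_imp' hbd]

lemma mul_mul_log_mul_div_mul {t s a b : ℝ} (hs : s ≠ 0) (hab : b = 0 → a = 0) :
    t * a * log (t * a / (s * b)) = t * log (t / s) * a + t * (a * log (a / b)) := by
  rcases eq_or_ne t 0 with rfl | ht
  · simp
  rcases eq_or_ne a 0 with rfl | ha
  · simp
  rw [mul_div_mul_comm, log_mul (div_ne_zero ht hs) (div_ne_zero ha (mt hab ha))]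
  ring

section

variable {𝒳 : Type*} [Fintype 𝒳]

lemma KL_of_forall_eq_zero_imp {p q : 𝒳 → ℝ} (h : ∀ x, q x = 0 → p x = 0) :
    KL p q = ENNReal.ofReal (∑ x, p x * log (p x / q x)) :=
  if_pos h

lemma D2_eq {ρ ε : ℝ} (hε : 0 < ε) (hε1 : ε < 1) :
    D2 ρ ε = ENNReal.ofReal (ρ * log (ρ / ε) + (1 - ρ) * log ((1 - ρ) / (1 - ε))) := by
  rw [D2, KL_of_forall_eq_zero_imp, Fintype.sum_bool]
  · simp only [if_true, Bool.false_eq_true, if_false]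
  · intro b hb
    cases b <;> simp at hb <;> linarith

lemma mix_mem_simplex {a : ℝ} {p q : 𝒳 → ℝ} (ha : a ∈ Set.Icc 0 1) (hp : p ∈ simplex 𝒳)
    (hq : q ∈ simplex 𝒳) : mix a p q ∈ simplex 𝒳 := by
  refine ⟨fun x => ?_, ?_⟩
  · have := hp.1 x
    have := hq.1 x
    simp only [mix]
    nlinarith [ha.1, ha.2]
  · simp only [mix, Finset.sum_add_distrib, ← Finset.mul_sum, hp.2, hq.2]
    ring

lemma sum_mix_mul_log_div_mix_le {ρ ε : ℝ} {P q v : 𝒳 → ℝ} (hρ : ρ ∈ Set.Icc 0 1)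
    (hε : 0 < ε) (hε1 : ε < 1) (hP : ∀ x, 0 < P x) (hq : q ∈ simplex 𝒳) (hv : v ∈ simplex 𝒳) :
    ∑ x, mix ρ q v x * log (mix ρ q v x / mix ε P v x) ≤
      ρ * log (ρ / ε) + (1 - ρ) * log ((1 - ρ) / (1 - ε)) + (1 - ρ) * ∑ x, q x * log (q x / P x) := by
  have hvv : ∀ x, v x * log (v x / v x) = 0 := fun x => by
    rcases eq_or_ne (v x) 0 with h | h <;> simp [h]
  calc ∑ x, mix ρ q v x * log (mix ρ q v x / mix ε P v x)
      ≤ ∑ x, ((1 - ρ) * q x * log ((1 - ρ) * q x / ((1 - ε) * P x))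
          + ρ * v x * log (ρ * v x / (ε * v x))) :=
        Finset.sum_le_sum fun x _ => add_mul_log_add_div_add_le
          (mul_nonneg (by linarith [hρ.2]) (hq.1 x)) (mul_nonneg hρ.1 (hv.1 x))
          (mul_nonneg (by linarith) (hP x).le) (mul_nonneg hε.le (hv.1 x))
          (fun h => absurd h (mul_pos (by linarith) (hP x)).ne')
          (fun h => by simp [(mul_eq_zero.1 h).resolve_left hε.ne'])
    _ = ∑ x, ((1 - ρ) * log ((1 - ρ) / (1 - ε)) * q x + (1 - ρ) * (q x * log (q x / P x))
          + ρ * log (ρ / ε) * v x) := by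
        refine Finset.sum_congr rfl fun x _ => ?_
        rw [mul_mul_log_mul_div_mul (by linarith) fun h => absurd h (hP x).ne',
          mul_mul_log_mul_div_mul hε.ne' id, hvv, mul_zero, add_zero]
    _ = _ := by
        simp only [Finset.sum_add_distrib, ← Finset.mul_sum, hq.2, hv.2]
        ring

lemma KL_mix_le {ρ ε : ℝ} {P q v : 𝒳 → ℝ} (hρ : ρ ∈ Set.Icc 0 1) (hε : 0 < ε) (hε1 : ε < 1)
    (hP : ∀ x, 0 < P x) (hq : q ∈ simplex 𝒳) (hv : v ∈ simplex 𝒳) :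
    KL (mix ρ q v) (mix ε P v) ≤ D2 ρ ε + ENNReal.ofReal (1 - ρ) * KL q P := by
  have hmix : ∀ x, 0 < mix ε P v x := fun x =>
    add_pos_of_pos_of_nonneg (mul_pos (by linarith) (hP x)) (mul_nonneg hε.le (hv.1 x))
  rw [KL_of_forall_eq_zero_imp fun x h => absurd h (hmix x).ne',
    KL_of_forall_eq_zero_imp fun x h => absurd h (hP x).ne', D2_eq hε hε1,
    ← ENNReal.ofReal_mul (by linarith [hρ.2])]
  exact (ENNReal.ofReal_le_ofReal (sum_mix_mul_log_div_mix_le hρ hε hε1 hP hq hv)).trans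
    ENNReal.ofReal_add_le

end

theorem claim2_general {𝒳 : Type*} [Fintype 𝒳] (P0 P1 : 𝒳 → ℝ) (hfs0 : ∀ x, 0 < P0 x)
    {ε lam : ℝ} (hε : 0 < ε) (hε1 : ε < 1) :
    (⨅ u ∈ simplex 𝒳, ⨅ p ∈ BKL P1 lam, KL p (mix ε P0 u)) ≤
      ⨅ ρ ∈ Set.Icc (0:ℝ) 1, ⨅ q ∈ simplex 𝒳, ⨅ v ∈ simplex 𝒳,
        ⨅ (_ : KL (mix ρ q v) P1 ≤ ENNReal.ofReal lam),
          D2 ρ ε + ENNReal.ofReal (1 - ρ) * KL q P0 := by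
  refine le_iInf₂ fun ρ hρ => le_iInf₂ fun q hq => le_iInf₂ fun v hv => le_iInf fun hball => ?_
  calc ⨅ u ∈ simplex 𝒳, ⨅ p ∈ BKL P1 lam, KL p (mix ε P0 u)
      ≤ KL (mix ρ q v) (mix ε P0 v) :=
        iInf₂_le_of_le v hv (iInf₂_le _ ⟨mix_mem_simplex hρ hq hv, hball⟩)
    _ ≤ D2 ρ ε + ENNReal.ofReal (1 - ρ) * KL q P0 := KL_mix_le hρ hε hε1 hfs0 hq hv

/-- **Claim 2**: for `λ ∈ (0, D(P0‖P1))` and `ε ∈ (0,1)`, the minimum over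
`ρ ∈ [0,1]`, `q,v ∈ Δ` with `D((1-ρ)q + ρv ‖ P1) ≤ λ` of `D₂(ρ‖ε) + (1-ρ) D(q‖P0)`
is at least the minimum over `u ∈ Δ`, `p ∈ B_KL(P1,λ)` of `D(p ‖ (1-ε)P0 + εu)`. -/
theorem claim2 {𝒳 : Type*} [Fintype 𝒳] [Nonempty 𝒳]
    (P0 P1 : 𝒳 → ℝ) (hP0 : P0 ∈ simplex 𝒳) (hP1 : P1 ∈ simplex 𝒳)
    (hfs0 : ∀ x, 0 < P0 x) (hfs1 : ∀ x, 0 < P1 x) (hne : P0 ≠ P1)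
    {ε lam : ℝ} (hε : 0 < ε) (hε1 : ε < 1)
    (hlam : 0 < lam) (hlam' : ENNReal.ofReal lam < KL P0 P1) :
    (⨅ u ∈ simplex 𝒳, ⨅ p ∈ BKL P1 lam, KL p (mix ε P0 u)) ≤
      ⨅ ρ ∈ Set.Icc (0:ℝ) 1, ⨅ q ∈ simplex 𝒳, ⨅ v ∈ simplex 𝒳,
        ⨅ (_ : KL (mix ρ q v) P1 ≤ ENNReal.ofReal lam),
          D2 ρ ε + ENNReal.ofReal (1 - ρ) * KL q P0 :=
  claim2_general P0 P1 hfs0 hε hε1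

end
end

section
/- (Appendix B continuity claim.) Fix ε ∈ (0,1) and λ > 0. Define, for t ≥ 0, F(t) = min over ρ ∈ [0,1] and q,v ∈ Δ satisfying D((1−ρ)q + ρv ‖ P₁) ≤ t of D₂(ρ‖ε) + (1−ρ)·D(q‖P₀). Then lim_{δ→0⁺} F(λ+δ) = F(λ). -/
open scoped BigOperators ENNReal Classical
open Filter

noncomputable section

/-- `F(t) = min_{ρ ∈ [0,1], q,v ∈ Δ : D((1-ρ)q+ρv‖P1) ≤ t} D₂(ρ‖ε) + (1-ρ)D(q‖P0)`. -/
def Fber {𝒳 : Type*} [Fintype 𝒳] (P0 P1 : 𝒳 → ℝ) (ε t : ℝ) : ℝ≥0∞ :=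
  ⨅ ρ ∈ Set.Icc (0:ℝ) 1, ⨅ q ∈ simplex 𝒳, ⨅ v ∈ simplex 𝒳,
    ⨅ (_ : KL (mix ρ q v) P1 ≤ ENNReal.ofReal t),
      D2 ρ ε + ENNReal.ofReal (1 - ρ) * KL q P0

/-!
`F` is antitone, so `F(λ+δ) ≤ F(λ)`. Conversely, mixing a point `(1-ρ)q + ρv` feasible for
`t = λ+δ` with `P1` in proportion `θ = δ/(λ+δ)` gives the point `(1-ρ')q + ρ'v'` with
`ρ' = ρ + θ(1-ρ)`; by convexity of KL its divergence from `P1` is at most `(1-θ)t = λ`.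
The term `(1-ρ)D(q‖P0)` only decreases, and `D₂(·‖ε)` is uniformly continuous on `[0,1]`,
so `F(λ) ≤ F(λ+δ) + o(1)`.
-/

open Set Topology

def binKL (ε ρ : ℝ) : ℝ :=
  ρ * Real.log (ρ / ε) + (1 - ρ) * Real.log ((1 - ρ) / (1 - ε))

theorem continuous_binKL {ε : ℝ} (hε : 0 < ε) (hε1 : ε < 1) : Continuous (binKL ε) := by
  have hε1' : 1 - ε ≠ 0 := by linarith
  have heq : binKL ε = fun ρ => ε * ((ρ / ε) * Real.log (ρ / ε))
      + (1 - ε) * (((1 - ρ) / (1 - ε)) * Real.log ((1 - ρ) / (1 - ε))) := by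
    funext ρ
    rw [binKL, ← mul_assoc, ← mul_assoc, mul_div_cancel₀ _ hε.ne', mul_div_cancel₀ _ hε1']
  rw [heq]
  fun_prop [Real.continuous_mul_log]

theorem KL_eq_ofReal_of_pos {𝒳 : Type*} [Fintype 𝒳] (p : 𝒳 → ℝ) {q : 𝒳 → ℝ}
    (hq : ∀ x, 0 < q x) : KL p q = ENNReal.ofReal (∑ x, p x * Real.log (p x / q x)) :=
  if_pos fun x hx => absurd hx (hq x).ne'

theorem D2_eq_ofReal_binKL {ε : ℝ} (hε : 0 < ε) (hε1 : ε < 1) (ρ : ℝ) :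
    D2 ρ ε = ENNReal.ofReal (binKL ε ρ) := by
  rw [D2, KL_eq_ofReal_of_pos _ (by rintro (_ | _) <;> simp [hε, hε1]), Fintype.sum_bool]
  simp only [if_true, Bool.false_eq_true, if_false, binKL]

/-- `x ↦ x log (x / c)` is convex and vanishes at `x = c`. -/
theorem mix_mul_log_div_le {a c θ : ℝ} (ha : 0 ≤ a) (hc : 0 < c) (hθ0 : 0 ≤ θ) (hθ1 : θ ≤ 1) :
    ((1 - θ) * a + θ * c) * Real.log (((1 - θ) * a + θ * c) / c)
      ≤ (1 - θ) * (a * Real.log (a / c)) := by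
  have hsplit : ∀ x : ℝ, 0 ≤ x → x * Real.log (x / c) = x * Real.log x - x * Real.log c := by
    intro x hx
    rcases hx.eq_or_lt with rfl | hx
    · simp
    · rw [Real.log_div hx.ne' hc.ne']; ring
  have hconv := Real.convexOn_mul_log.2 (mem_Ici.2 ha) (mem_Ici.2 hc.le)
    (sub_nonneg.2 hθ1) hθ0 (sub_add_cancel 1 θ)
  simp only [smul_eq_mul] at hconv
  rw [hsplit _ (by positivity), hsplit _ ha]
  nlinarith

theorem KL_mix_self_le {𝒳 : Type*} [Fintype 𝒳] {p P : 𝒳 → ℝ} (hp : ∀ x, 0 ≤ p x)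
    (hP : ∀ x, 0 < P x) {θ : ℝ} (hθ0 : 0 ≤ θ) (hθ1 : θ ≤ 1) :
    KL (mix θ p P) P ≤ ENNReal.ofReal (1 - θ) * KL p P := by
  rw [KL_eq_ofReal_of_pos _ hP, KL_eq_ofReal_of_pos _ hP, ← ENNReal.ofReal_mul (sub_nonneg.2 hθ1),
    Finset.mul_sum]
  exact ENNReal.ofReal_le_ofReal <| Finset.sum_le_sum fun x _ =>
    mix_mul_log_div_le (hp x) (hP x) hθ0 hθ1

theorem exists_mem_simplex_mix_eq_mix_mix {𝒳 : Type*} [Fintype 𝒳] {ρ θ : ℝ} (hρ : 0 ≤ ρ)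
    (hθ0 : 0 < θ) (hθ1 : θ ≤ 1) (q : 𝒳 → ℝ) {v P : 𝒳 → ℝ} (hv : v ∈ simplex 𝒳)
    (hP : P ∈ simplex 𝒳) :
    ∃ v' ∈ simplex 𝒳, mix (ρ + θ * (1 - ρ)) q v' = mix θ (mix ρ q v) P := by
  have hpos : 0 < ρ + θ * (1 - ρ) := by nlinarith
  refine ⟨fun x => ((1 - θ) * (ρ * v x) + θ * P x) / (ρ + θ * (1 - ρ)), ⟨fun x => ?_, ?_⟩, ?_⟩
  · have := hv.1 x
    have := hP.1 x
    have : 0 ≤ 1 - θ := by linarith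
    positivity
  · rw [← Finset.sum_div, Finset.sum_add_distrib, ← Finset.mul_sum, ← Finset.mul_sum,
      ← Finset.mul_sum, hv.2, hP.2, div_eq_one_iff_eq hpos.ne']
    ring
  · funext x
    simp only [mix]
    rw [mul_div_cancel₀ _ hpos.ne']
    ring

theorem Fber_antitone {𝒳 : Type*} [Fintype 𝒳] (P0 P1 : 𝒳 → ℝ) (ε : ℝ) :
    Antitone (Fber P0 P1 ε) := fun _ _ hst =>
  iInf₂_mono fun _ _ => iInf₂_mono fun _ _ => iInf₂_mono fun _ _ =>
    le_iInf fun hs => iInf_le _ (hs.trans (ENNReal.ofReal_le_ofReal hst))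

theorem Fber_one_sub_mul_le_add {𝒳 : Type*} [Fintype 𝒳] (P0 : 𝒳 → ℝ) {P1 : 𝒳 → ℝ}
    (hP1 : P1 ∈ simplex 𝒳) (hfs1 : ∀ x, 0 < P1 x) {ε θ : ℝ} (t : ℝ) {e : ℝ≥0∞}
    (hθ0 : 0 < θ) (hθ1 : θ ≤ 1) (hD2 : ∀ ρ ∈ Icc (0 : ℝ) 1, D2 (ρ + θ * (1 - ρ)) ε ≤ D2 ρ ε + e) :
    Fber P0 P1 ε ((1 - θ) * t) ≤ Fber P0 P1 ε t + e := by
  simp only [Fber, ENNReal.iInf_add]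
  refine le_iInf₂ fun ρ hρ => le_iInf₂ fun q hq => le_iInf₂ fun v hv => le_iInf fun hKL => ?_
  obtain ⟨v', hv', hmix⟩ := exists_mem_simplex_mix_eq_mix_mix hρ.1 hθ0 hθ1 q hv hP1
  have hmix_nonneg : ∀ x, 0 ≤ mix ρ q v x := fun x =>
    add_nonneg (mul_nonneg (sub_nonneg.2 hρ.2) (hq.1 x)) (mul_nonneg hρ.1 (hv.1 x))
  have hfeasible : KL (mix (ρ + θ * (1 - ρ)) q v') P1 ≤ ENNReal.ofReal ((1 - θ) * t) := by
    rw [hmix, ENNReal.ofReal_mul (sub_nonneg.2 hθ1)]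
    exact (KL_mix_self_le hmix_nonneg hfs1 hθ0.le hθ1).trans (by gcongr)
  refine iInf₂_le_of_le (ρ + θ * (1 - ρ)) ⟨by nlinarith [hρ.1, hρ.2], by nlinarith [hρ.2]⟩ <|
    iInf₂_le_of_le q hq <| iInf₂_le_of_le v' hv' <| iInf_le_of_le hfeasible ?_
  calc D2 (ρ + θ * (1 - ρ)) ε + ENNReal.ofReal (1 - (ρ + θ * (1 - ρ))) * KL q P0
      ≤ (D2 ρ ε + e) + ENNReal.ofReal (1 - ρ) * KL q P0 := by
        gcongr
        · exact hD2 ρ hρ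
        · nlinarith [hρ.2]
    _ = D2 ρ ε + ENNReal.ofReal (1 - ρ) * KL q P0 + e := add_right_comm _ _ _

theorem ContinuousOn.eventually_forall_add_mul_one_sub_le_add {f : ℝ → ℝ}
    (hf : ContinuousOn f (Icc 0 1)) {e : ℝ} (he : 0 < e) :
    ∀ᶠ θ in 𝓝[>] 0, ∀ ρ ∈ Icc (0 : ℝ) 1, f (ρ + θ * (1 - ρ)) ≤ f ρ + e := by
  obtain ⟨d, hd, hf_unif⟩ :=
    Metric.uniformContinuousOn_iff.1 (isCompact_Icc.uniformContinuousOn_of_continuous hf) e he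
  filter_upwards [Ioo_mem_nhdsGT (lt_min hd one_pos)] with θ ⟨hθ0, hθ⟩ ρ ⟨hρ0, hρ1⟩
  have hθd := hθ.trans_le (min_le_left _ _)
  have hθ1 := hθ.le.trans (min_le_right _ _)
  have hmem : ρ + θ * (1 - ρ) ∈ Icc (0 : ℝ) 1 := ⟨by nlinarith, by nlinarith⟩
  have hdist : dist (ρ + θ * (1 - ρ)) ρ < d := by
    rw [Real.dist_eq, add_sub_cancel_left, abs_of_nonneg (by nlinarith)]
    nlinarith
  have := hf_unif _ hmem _ ⟨hρ0, hρ1⟩ hdist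
  rw [Real.dist_eq] at this
  linarith [(abs_lt.1 this).2]

theorem eventually_forall_D2_add_mul_one_sub_le_add {ε : ℝ} (hε : 0 < ε) (hε1 : ε < 1)
    {e : ℝ} (he : 0 < e) :
    ∀ᶠ θ in 𝓝[>] 0, ∀ ρ ∈ Icc (0 : ℝ) 1,
      D2 (ρ + θ * (1 - ρ)) ε ≤ D2 ρ ε + ENNReal.ofReal e := by
  filter_upwards [(continuous_binKL hε hε1).continuousOn.eventually_forall_add_mul_one_sub_le_add
    he] with θ hθ ρ hρ
  rw [D2_eq_ofReal_binKL hε hε1, D2_eq_ofReal_binKL hε hε1]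
  exact (ENNReal.ofReal_le_ofReal (hθ ρ hρ)).trans ENNReal.ofReal_add_le

theorem ENNReal.tendsto_nhds_of_eventually_le_of_le_add {α : Type*} {l : Filter α}
    {u : α → ℝ≥0∞} {a : ℝ≥0∞} (hle : ∀ᶠ x in l, u x ≤ a)
    (hge : ∀ e : ℝ, 0 < e → ∀ᶠ x in l, a ≤ u x + ENNReal.ofReal e) : Tendsto u l (𝓝 a) := by
  refine ENNReal.tendsto_nhds_of_Icc fun ε hε => ?_
  obtain ⟨e, -, he, heε⟩ := ENNReal.lt_iff_exists_real_btwn.1 hε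
  filter_upwards [hle, hge e (ENNReal.ofReal_pos.1 he)] with x hx_le hx_ge
  exact ⟨tsub_le_iff_right.2 (hx_ge.trans (by gcongr)), hx_le.trans le_self_add⟩

theorem appendixB_continuity_general {𝒳 : Type*} [Fintype 𝒳]
    (P0 P1 : 𝒳 → ℝ) (hP1 : P1 ∈ simplex 𝒳)
    (hfs1 : ∀ x, 0 < P1 x)
    {ε lam : ℝ} (hε : 0 < ε) (hε1 : ε < 1) (hlam : 0 < lam) :
    Filter.Tendsto (fun δ : ℝ => Fber P0 P1 ε (lam + δ))
      (nhdsWithin 0 (Set.Ioi 0)) (nhds (Fber P0 P1 ε lam)) := by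
  refine ENNReal.tendsto_nhds_of_eventually_le_of_le_add ?_ fun e he => ?_
  · filter_upwards [self_mem_nhdsWithin] with δ hδ
    exact Fber_antitone P0 P1 ε (le_add_of_nonneg_right (le_of_lt hδ))
  · have hθ : Tendsto (fun δ => δ / (lam + δ)) (𝓝[>] 0) (𝓝[>] 0) := by
      refine tendsto_nhdsWithin_iff.2 ⟨?_, ?_⟩
      · have hcont : ContinuousAt (fun δ : ℝ => δ / (lam + δ)) 0 :=
          continuousAt_id.div (continuousAt_const.add continuousAt_id) (by simpa using hlam.ne')
        simpa using hcont.tendsto.mono_left nhdsWithin_le_nhds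
      · filter_upwards [self_mem_nhdsWithin] with δ (hδ : 0 < δ)
        exact div_pos hδ (by linarith)
    filter_upwards [hθ.eventually (eventually_forall_D2_add_mul_one_sub_le_add hε hε1 he),
      self_mem_nhdsWithin] with δ hD2 (hδ : 0 < δ)
    have hpos : 0 < lam + δ := by linarith
    calc Fber P0 P1 ε lam = Fber P0 P1 ε ((1 - δ / (lam + δ)) * (lam + δ)) := by
          congr 1; field_simp; ring
      _ ≤ _ := Fber_one_sub_mul_le_add P0 hP1 hfs1 _ (div_pos hδ hpos)
          (div_le_one_of_le₀ (by linarith) hpos.le) hD2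

/-- **Appendix B continuity claim**: `F(λ+δ) → F(λ)` as `δ → 0⁺`. -/
theorem appendixB_continuity {𝒳 : Type*} [Fintype 𝒳] [Nonempty 𝒳]
    (P0 P1 : 𝒳 → ℝ) (hP0 : P0 ∈ simplex 𝒳) (hP1 : P1 ∈ simplex 𝒳)
    (hfs0 : ∀ x, 0 < P0 x) (hfs1 : ∀ x, 0 < P1 x) (hne : P0 ≠ P1)
    {ε lam : ℝ} (hε : 0 < ε) (hε1 : ε < 1) (hlam : 0 < lam) :
    Filter.Tendsto (fun δ : ℝ => Fber P0 P1 ε (lam + δ))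
      (nhdsWithin 0 (Set.Ioi 0)) (nhds (Fber P0 P1 ε lam)) :=
  appendixB_continuity_general P0 P1 hP1 hfs1 hε hε1 hlam
end
end

section
/- (Appendix D continuity claim, converse side.) Fix ε ∈ (0,1) and λ > 0. Then the limit as δ → 0⁺ (over δ ∈ (0, min(ε,λ))) of the minimum over p,q ∈ Δ satisfying d_TV(p,q) ≤ ε−δ and D(p‖P₁) ≤ λ−δ of D(q‖P₀) equals the minimum over p,q ∈ Δ satisfying d_TV(p,q) ≤ ε and D(p‖P₁) ≤ λ of D(q‖P₀). -/
/-!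
The minimum is antitone in both budgets, which gives the lower bound. For the upper bound, mix a
feasible pair `(p, q)` with `(P1, P1)` in proportion `a = δ / min ε λ`: the total variation
distance scales by `1 - a`, and by convexity of `D(·‖P)` together with `D(P1‖P1) = 0` so does
`D(p‖P1)`, so the mixed pair meets the budgets `ε - δ`, `λ - δ`, while `D(q‖P0)` grows by at
most `a · D(P1‖P0)`, which vanishes as `δ → 0`.
-/

open scoped BigOperators ENNReal Classical
open Filter

noncomputable section

/-- The doubly back-off minimum appearing in the strong contamination converse. -/
def Ksc2 {𝒳 : Type*} [Fintype 𝒳] (P0 P1 : 𝒳 → ℝ) (e t : ℝ) : ℝ≥0∞ :=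
  ⨅ p ∈ simplex 𝒳, ⨅ q ∈ simplex 𝒳,
    ⨅ (_ : dTV p q ≤ e), ⨅ (_ : KL p P1 ≤ ENNReal.ofReal t), KL q P0

section Mixing

variable {𝒳 : Type*} [Fintype 𝒳]

lemma KL_of_pos (p : 𝒳 → ℝ) {q : 𝒳 → ℝ} (hq : ∀ x, 0 < q x) :
    KL p q = ENNReal.ofReal (∑ x, p x * Real.log (p x / q x)) :=
  if_pos fun x hx => absurd hx (hq x).ne'

lemma KL_self {q : 𝒳 → ℝ} (hq : ∀ x, 0 < q x) : KL q q = 0 := by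
  rw [KL_of_pos q hq, Finset.sum_eq_zero fun x _ => by
    rw [div_self (hq x).ne', Real.log_one, mul_zero], ENNReal.ofReal_zero]

lemma convexOn_mul_log_div {c : ℝ} (hc : 0 < c) :
    ConvexOn ℝ (Set.Ici 0) fun x : ℝ => x * Real.log (x / c) := by
  have hlin : ConvexOn ℝ (Set.Ici (0 : ℝ)) fun x => x * -Real.log c :=
    (LinearMap.mul ℝ ℝ |>.flip (-Real.log c)).convexOn (convex_Ici 0)
  refine (Real.convexOn_mul_log.add hlin).congr fun x (hx : 0 ≤ x) => ?_
  rcases hx.eq_or_lt with rfl | hx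
  · simp
  · simp only [Pi.add_apply]
    rw [Real.log_div hx.ne' hc.ne']
    ring

lemma KL_mix_le_s15 {u v P : 𝒳 → ℝ} (hu : ∀ x, 0 ≤ u x) (hv : ∀ x, 0 ≤ v x)
    (hP : ∀ x, 0 < P x) {a : ℝ} (ha₀ : 0 ≤ a) (ha₁ : a ≤ 1) :
    KL (mix a u v) P ≤ ENNReal.ofReal (1 - a) * KL u P + ENNReal.ofReal a * KL v P := by
  simp only [KL_of_pos _ hP, ← ENNReal.ofReal_mul (sub_nonneg.2 ha₁), ← ENNReal.ofReal_mul ha₀]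
  refine (ENNReal.ofReal_le_ofReal ?_).trans ENNReal.ofReal_add_le
  rw [Finset.mul_sum, Finset.mul_sum, ← Finset.sum_add_distrib]
  exact Finset.sum_le_sum fun x _ =>
    (convexOn_mul_log_div (hP x)).2 (hu x) (hv x) (sub_nonneg.2 ha₁) ha₀ (by ring)

lemma mix_mem_simplex_s15 {u v : 𝒳 → ℝ} (hu : u ∈ simplex 𝒳) (hv : v ∈ simplex 𝒳)
    {a : ℝ} (ha₀ : 0 ≤ a) (ha₁ : a ≤ 1) : mix a u v ∈ simplex 𝒳 := by
  refine ⟨fun x => ?_, ?_⟩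
  · have := hu.1 x
    have := hv.1 x
    simp only [mix]
    nlinarith
  · simp only [mix, Finset.sum_add_distrib, ← Finset.mul_sum, hu.2, hv.2]
    ring

lemma dTV_mix (p q v : 𝒳 → ℝ) {a : ℝ} (ha₁ : a ≤ 1) :
    dTV (mix a p v) (mix a q v) = (1 - a) * dTV p q := by
  have key : ∀ x, |mix a p v x - mix a q v x| = (1 - a) * |p x - q x| := fun x => by
    rw [show mix a p v x - mix a q v x = (1 - a) * (p x - q x) by simp only [mix]; ring,
      abs_mul, abs_of_nonneg (sub_nonneg.2 ha₁)]
  simp only [dTV, key, ← Finset.mul_sum]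
  ring

end Mixing

section Ksc2

variable {𝒳 : Type*} [Fintype 𝒳] {P0 P1 : 𝒳 → ℝ}

lemma Ksc2_antitone {e e' t t' : ℝ} (he : e' ≤ e) (ht : t' ≤ t) :
    Ksc2 P0 P1 e t ≤ Ksc2 P0 P1 e' t' :=
  le_iInf₂ fun p hp => le_iInf₂ fun q hq => le_iInf fun hd => le_iInf fun hk =>
    iInf₂_le_of_le p hp <| iInf₂_le_of_le q hq <| iInf_le_of_le (hd.trans he) <|
      iInf_le _ (hk.trans (ENNReal.ofReal_le_ofReal ht))

lemma Ksc2_one_sub_mul_le (hP1 : P1 ∈ simplex 𝒳) (hfs0 : ∀ x, 0 < P0 x)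
    (hfs1 : ∀ x, 0 < P1 x) {a : ℝ} (ha₀ : 0 ≤ a) (ha₁ : a < 1) (e t : ℝ) :
    Ksc2 P0 P1 ((1 - a) * e) ((1 - a) * t) ≤
      ENNReal.ofReal (1 - a) * Ksc2 P0 P1 e t + ENNReal.ofReal a * KL P1 P0 := by
  have h0 : ENNReal.ofReal (1 - a) ≠ 0 := by simpa using ha₁
  simp only [Ksc2, ENNReal.mul_iInf_of_ne h0 ENNReal.ofReal_ne_top, ENNReal.iInf_add]
  refine le_iInf₂ fun p hp => le_iInf₂ fun q hq => le_iInf fun hd => le_iInf fun hk => ?_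
  refine iInf₂_le_of_le (mix a p P1) (mix_mem_simplex_s15 hp hP1 ha₀ ha₁.le) <|
    iInf₂_le_of_le (mix a q P1) (mix_mem_simplex_s15 hq hP1 ha₀ ha₁.le) <|
      iInf_le_of_le ?_ <| iInf_le_of_le ?_ <| KL_mix_le_s15 hq.1 hP1.1 hfs0 ha₀ ha₁.le
  · rw [dTV_mix p q P1 ha₁.le]
    exact mul_le_mul_of_nonneg_left hd (sub_nonneg.2 ha₁.le)
  · calc KL (mix a p P1) P1
        ≤ ENNReal.ofReal (1 - a) * KL p P1 + ENNReal.ofReal a * KL P1 P1 :=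
          KL_mix_le_s15 hp.1 hP1.1 hfs1 ha₀ ha₁.le
      _ ≤ ENNReal.ofReal ((1 - a) * t) := by
          rw [KL_self hfs1, mul_zero, add_zero, ENNReal.ofReal_mul (sub_nonneg.2 ha₁.le)]
          gcongr

end Ksc2

theorem appendixD_continuity_converse_general {𝒳 : Type*} [Fintype 𝒳]
    (P0 P1 : 𝒳 → ℝ) (hP1 : P1 ∈ simplex 𝒳)
    (hfs0 : ∀ x, 0 < P0 x) (hfs1 : ∀ x, 0 < P1 x)
    {ε lam : ℝ} (hε : 0 < ε) (hlam : 0 < lam) :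
    Filter.Tendsto (fun δ : ℝ => Ksc2 P0 P1 (ε - δ) (lam - δ))
      (nhdsWithin 0 (Set.Ioo 0 (min ε lam))) (nhds (Ksc2 P0 P1 ε lam)) := by
  set μ := min ε lam
  have hμ : 0 < μ := lt_min hε hlam
  have hratio : Tendsto (fun δ : ℝ => δ / μ) (nhdsWithin 0 (Set.Ioo 0 μ)) (nhds 0) := by
    simpa using ((continuous_id.div_const μ).tendsto 0).mono_left nhdsWithin_le_nhds
  have hbound : Tendsto (fun δ => ENNReal.ofReal (1 - δ / μ) * Ksc2 P0 P1 ε lam +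
      ENNReal.ofReal (δ / μ) * KL P1 P0) (nhdsWithin 0 (Set.Ioo 0 μ))
      (nhds (Ksc2 P0 P1 ε lam)) := by
    have hC : KL P1 P0 ≠ ⊤ := by simp [KL_of_pos P1 hfs0]
    simpa using (ENNReal.Tendsto.mul_const (ENNReal.tendsto_ofReal (hratio.const_sub 1))
      (by simp)).add (ENNReal.Tendsto.mul_const (ENNReal.tendsto_ofReal hratio) (Or.inr hC))
  refine tendsto_of_tendsto_of_tendsto_of_le_of_le' tendsto_const_nhds hbound ?_ ?_
  · filter_upwards [self_mem_nhdsWithin] with δ hδ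
    exact Ksc2_antitone (by linarith [hδ.1]) (by linarith [hδ.1])
  · filter_upwards [self_mem_nhdsWithin] with δ ⟨hδ₀, hδμ⟩
    have hshrink : ∀ b, μ ≤ b → (1 - δ / μ) * b ≤ b - δ := fun b hb => by
      have : δ ≤ δ / μ * b := by
        rw [div_mul_eq_mul_div, le_div_iff₀ hμ]
        exact mul_le_mul_of_nonneg_left hb hδ₀.le
      linarith
    exact (Ksc2_antitone (hshrink ε (min_le_left _ _)) (hshrink lam (min_le_right _ _))).trans
      (Ksc2_one_sub_mul_le hP1 hfs0 hfs1 (div_pos hδ₀ hμ).le ((div_lt_one hμ).2 hδμ) ε lam)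

/-- **Appendix D continuity claim (converse side)**: as `δ → 0⁺` over
`δ ∈ (0, min ε λ)`, the minimum with budgets `ε-δ`, `λ-δ` tends to the minimum with
budgets `ε`, `λ`. -/
theorem appendixD_continuity_converse {𝒳 : Type*} [Fintype 𝒳] [Nonempty 𝒳]
    (P0 P1 : 𝒳 → ℝ) (hP0 : P0 ∈ simplex 𝒳) (hP1 : P1 ∈ simplex 𝒳)
    (hfs0 : ∀ x, 0 < P0 x) (hfs1 : ∀ x, 0 < P1 x) (hne : P0 ≠ P1)
    {ε lam : ℝ} (hε : 0 < ε) (hε1 : ε < 1) (hlam : 0 < lam) :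
    Filter.Tendsto (fun δ : ℝ => Ksc2 P0 P1 (ε - δ) (lam - δ))
      (nhdsWithin 0 (Set.Ioo 0 (min ε lam))) (nhds (Ksc2 P0 P1 ε lam)) :=
  appendixD_continuity_converse_general P0 P1 hP1 hfs0 hfs1 hε hlam

end
end

section
/- (Remark 2 comparison.) For any λ > 0 and any ε ∈ (0,1), the minimum over ρ ∈ [0,1] and q,v ∈ Δ satisfying D((1−ρ)q + ρv ‖ P₁) ≤ λ of D₂(ρ‖ε) + (1−ρ)·D(q‖P₀) is less than or equal to (1−ε) times the minimum over q,u ∈ Δ satisfying D((1−ε)q + εu ‖ P₁) ≤ λ of D(q‖P₀). -/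
open scoped BigOperators ENNReal Classical
open Filter

noncomputable section

/-! Taking `ρ = ε` on the left makes `D₂(ρ‖ε)` vanish and turns the constraint into the one on
the right, so each feasible `(q, u)` on the right is matched by a point of value `(1 - ε) D(q‖P₀)`
on the left. -/

lemma KL_self_s16 {𝒳 : Type*} [Fintype 𝒳] (p : 𝒳 → ℝ) : KL p p = 0 := by
  simp [KL]

lemma D2_self (ε : ℝ) : D2 ε ε = 0 := KL_self_s16 _

theorem remark2_comparison_general {𝒳 : Type*} [Fintype 𝒳]
    (P0 P1 : 𝒳 → ℝ)
    {ε lam : ℝ} (hε : 0 < ε) (hε1 : ε < 1) :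
    (⨅ ρ ∈ Set.Icc (0:ℝ) 1, ⨅ q ∈ simplex 𝒳, ⨅ v ∈ simplex 𝒳,
        ⨅ (_ : KL (mix ρ q v) P1 ≤ ENNReal.ofReal lam),
          D2 ρ ε + ENNReal.ofReal (1 - ρ) * KL q P0) ≤
      ENNReal.ofReal (1 - ε) *
        ⨅ q ∈ simplex 𝒳, ⨅ u ∈ simplex 𝒳,
          ⨅ (_ : KL (mix ε q u) P1 ≤ ENNReal.ofReal lam), KL q P0 := by
  have h1ε : ENNReal.ofReal (1 - ε) ≠ 0 := by simpa using hε1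
  simp_rw [ENNReal.mul_iInf_of_ne h1ε ENNReal.ofReal_ne_top, le_iInf_iff]
  intro q hq u hu hfeas
  calc _ ≤ D2 ε ε + ENNReal.ofReal (1 - ε) * KL q P0 :=
        iInf₂_le_of_le ε ⟨hε.le, hε1.le⟩ <| iInf₂_le_of_le q hq <| iInf₂_le_of_le u hu <|
          iInf_le _ hfeas
    _ = _ := by rw [D2_self, zero_add]

/-- **Remark 2 comparison**: the memoryless-ingress exponent is at most the
fixed-weight-uniform-ingress exponent. -/
theorem remark2_comparison {𝒳 : Type*} [Fintype 𝒳] [Nonempty 𝒳]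
    (P0 P1 : 𝒳 → ℝ) (hP0 : P0 ∈ simplex 𝒳) (hP1 : P1 ∈ simplex 𝒳)
    (hfs0 : ∀ x, 0 < P0 x) (hfs1 : ∀ x, 0 < P1 x) (hne : P0 ≠ P1)
    {ε lam : ℝ} (hε : 0 < ε) (hε1 : ε < 1) (hlam : 0 < lam) :
    (⨅ ρ ∈ Set.Icc (0:ℝ) 1, ⨅ q ∈ simplex 𝒳, ⨅ v ∈ simplex 𝒳,
        ⨅ (_ : KL (mix ρ q v) P1 ≤ ENNReal.ofReal lam),
          D2 ρ ε + ENNReal.ofReal (1 - ρ) * KL q P0) ≤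
      ENNReal.ofReal (1 - ε) *
        ⨅ q ∈ simplex 𝒳, ⨅ u ∈ simplex 𝒳,
          ⨅ (_ : KL (mix ε q u) P1 ≤ ENNReal.ofReal lam), KL q P0 :=
  remark2_comparison_general P0 P1 hε hε1

end
end
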